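/- arXiv:1302.4487 — 10 statements merged into one kernel-verified Lean document; each statement's English description precedes it below -/
import Mathlib

section
/- (Norm decrease of the relaxation step.) Let w ∈ H, let fw be a B-filtered version of w, let χ ∈ [0,1], and set u := (1 − χ)·w + χ·fw. Then ‖u‖ ≤ ‖w‖. -/
open RealInnerProductSpace

theorem relaxation_norm_decrease
    {H : Type*} [NormedAddCommGroup H] [InnerProductSpace ℝ H]
    (B : H →ₗ[ℝ] H →ₗ[ℝ] ℝ)
    (hBsymm : ∀ u v : H, B u v = B v u)
    (hBpos : ∀ v : H, 0 ≤ B v v)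
    (w fw : H)
    (hfilt : ∀ v : H, B fw v + ⟪fw, v⟫ = ⟪w, v⟫)
    (χ : ℝ) (hχ0 : 0 ≤ χ) (hχ1 : χ ≤ 1)
    (u : H) (hu : u = (1 - χ) • w + χ • fw) :
    ‖u‖ ≤ ‖w‖ := by
  have hf : ‖fw‖ ≤ ‖w‖ := by
    have h1 := hfilt fw
    have h2 : ‖fw‖ ^ 2 ≤ ⟪w, fw⟫ := by
      have := hBpos fw
      nlinarith [real_inner_self_eq_norm_sq fw]
    have h3 : ⟪w, fw⟫ ≤ ‖w‖ * ‖fw‖ := real_inner_le_norm w fw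
    nlinarith [norm_nonneg fw, norm_nonneg w]
  calc ‖u‖ ≤ ‖(1 - χ) • w‖ + ‖χ • fw‖ := hu ▸ norm_add_le _ _
    _ = (1 - χ) * ‖w‖ + χ * ‖fw‖ := by
        rw [norm_smul, norm_smul, Real.norm_eq_abs, Real.norm_eq_abs,
          abs_of_nonneg (by linarith), abs_of_nonneg hχ0]
    _ ≤ ‖w‖ := by nlinarith [norm_nonneg w]
end

section
/- (Stability condition for differential filters.) Let w ∈ H and let fw be a B-filtered version of w. Then ‖w − fw‖² ≤ ⟪w − fw, w⟫; that is, the operator G = I − F satisfies ‖G w‖² ≤ ⟪G w, w⟫. -/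
open RealInnerProductSpace

theorem filter_stability_condition
    {H : Type*} [NormedAddCommGroup H] [InnerProductSpace ℝ H]
    (B : H →ₗ[ℝ] H →ₗ[ℝ] ℝ)
    (hBsymm : ∀ u v : H, B u v = B v u)
    (hBpos : ∀ v : H, 0 ≤ B v v)
    (w fw : H)
    (hfilt : ∀ v : H, B fw v + ⟪fw, v⟫ = ⟪w, v⟫) :
    ‖w - fw‖ ^ 2 ≤ ⟪w - fw, w⟫ := by
  have h := hfilt fw
  have hkey : ⟪w - fw, fw⟫ = B fw fw := by
    rw [inner_sub_left]; linarith
  have hnorm : ‖w - fw‖ ^ 2 = ⟪w - fw, w⟫ - ⟪w - fw, fw⟫ := by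
    rw [← real_inner_self_eq_norm_sq, inner_sub_right]
  rw [hnorm, hkey]
  linarith [hBpos fw]
end

section
/- Let w ∈ H and let fw be a B-filtered version of w. Then the identity ⟪w − fw, w⟫ + ‖w − fw‖² + B (w − fw) (w − fw) = B w w holds; in particular ⟪w − fw, w⟫ ≤ B w w, i.e., the dissipation ⟪G w, w⟫ of the filter never exceeds the dissipation B w w of the eddy-viscosity closure model. -/
open RealInnerProductSpace

theorem filter_dissipation_identity
    {H : Type*} [NormedAddCommGroup H] [InnerProductSpace ℝ H]
    (B : H →ₗ[ℝ] H →ₗ[ℝ] ℝ)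
    (hBsymm : ∀ u v : H, B u v = B v u)
    (hBpos : ∀ v : H, 0 ≤ B v v)
    (w fw : H)
    (hfilt : ∀ v : H, B fw v + ⟪fw, v⟫ = ⟪w, v⟫) :
    ⟪w - fw, w⟫ + ‖w - fw‖ ^ 2 + B (w - fw) (w - fw) = B w w ∧
      ⟪w - fw, w⟫ ≤ B w w := by
  have h1 : ∀ v : H, ⟪w - fw, v⟫ = B fw v := by
    intro v
    have := hfilt v
    rw [inner_sub_left]
    linarith
  have e1 : ⟪w - fw, w⟫ = B fw w := h1 w
  have e2 : ‖w - fw‖ ^ 2 = B fw w - B fw fw := by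
    rw [← @real_inner_self_eq_norm_sq, h1 (w - fw), map_sub]
  have e3 : B (w - fw) (w - fw) = B w w - B w fw - B fw w + B fw fw := by
    simp [map_sub, LinearMap.sub_apply]; ring
  have hs := hBsymm w fw
  have key : ⟪w - fw, w⟫ + ‖w - fw‖ ^ 2 + B (w - fw) (w - fw) = B w w := by
    rw [e1, e2, e3]; linarith
  refine ⟨key, ?_⟩
  have := hBpos (w - fw)
  have hn : (0:ℝ) ≤ ‖w - fw‖ ^ 2 := by positivity
  linarith
end

section
/- (Theorem 1, abstract form.) Assume in addition that there is C ≥ 0 with B v v ≤ C²·‖v‖² for all v ∈ H. Let w ∈ H and let fw be a B-filtered version of w. Then (1/(C² + 2))·B w w ≤ ⟪w − fw, w⟫ ≤ B w w; that is, the model dissipation ⟪G w, w⟫ introduced by the filter stabilization is equivalent to the dissipation B w w = (δ² a(u) ∇w, ∇w) of the corresponding eddy-viscosity LES closure, with equivalence constants independent of B and w. -/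
open RealInnerProductSpace

theorem filter_dissipation_equivalence
    {H : Type*} [NormedAddCommGroup H] [InnerProductSpace ℝ H]
    (B : H →ₗ[ℝ] H →ₗ[ℝ] ℝ)
    (hBsymm : ∀ u v : H, B u v = B v u)
    (hBpos : ∀ v : H, 0 ≤ B v v)
    (C : ℝ) (hC : 0 ≤ C)
    (hBbound : ∀ v : H, B v v ≤ C ^ 2 * ‖v‖ ^ 2)
    (w fw : H)
    (hfilt : ∀ v : H, B fw v + ⟪fw, v⟫ = ⟪w, v⟫) :
    (1 / (C ^ 2 + 2)) * B w w ≤ ⟪w - fw, w⟫ ∧ ⟪w - fw, w⟫ ≤ B w w := by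
  set g := w - fw with hg
  have key : ∀ v : H, ⟪g, v⟫ = B fw v := by
    intro v
    have h := hfilt v
    rw [hg, inner_sub_left]
    linarith
  have hgw : ⟪g, w⟫ = B fw w := key w
  have hgf : ⟪g, fw⟫ = B fw fw := key fw
  have hgg : ⟪g, g⟫ = B fw g := key g
  have hng : ⟪g, g⟫ = ‖g‖ ^ 2 := real_inner_self_eq_norm_sq g
  have hw : (w : H) = fw + g := by rw [hg]; abel
  have hsplit : ⟪g, w⟫ = B fw fw + ‖g‖ ^ 2 := by
    rw [hw, inner_add_right, hgf, hng]
  have hfwW : B fw w = B fw fw + B fw g := by rw [hw, map_add]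
  have hexp : B w w = B fw fw + 2 * B fw g + B g g := by
    rw [hw]
    simp only [map_add, LinearMap.add_apply]
    have := hBsymm fw g
    linarith
  have hfg : B fw g = ‖g‖ ^ 2 := by rw [← hgg, hng]
  have hn0 : (0 : ℝ) ≤ ‖g‖ ^ 2 := sq_nonneg _
  have hff0 := hBpos fw
  have hgg0 := hBpos g
  have hbg := hBbound g
  constructor
  · rw [div_mul_eq_mul_div, div_le_iff₀ (by positivity)]
    nlinarith [sq_nonneg C, mul_nonneg (sq_nonneg C) hff0]
  · nlinarith
end

section
/- Let w ∈ H and let fw be a B-filtered version of w. Then B fw fw ≤ B w w; that is, the filtered field has no larger B-energy than the unfiltered field. -/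
open RealInnerProductSpace

theorem filtered_field_less_B_energy
    {H : Type*} [NormedAddCommGroup H] [InnerProductSpace ℝ H]
    (B : H →ₗ[ℝ] H →ₗ[ℝ] ℝ)
    (hBsymm : ∀ u v : H, B u v = B v u)
    (hBpos : ∀ v : H, 0 ≤ B v v)
    (w fw : H)
    (hfilt : ∀ v : H, B fw v + ⟪fw, v⟫ = ⟪w, v⟫) :
    B fw fw ≤ B w w := by
  have h1 := hfilt w
  have h2 := hfilt fw
  have h3 := hBpos (w - fw)
  simp only [map_sub, LinearMap.sub_apply] at h3
  have h4 : (0:ℝ) ≤ ⟪w - fw, w - fw⟫ := real_inner_self_nonneg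
  simp only [inner_sub_left, inner_sub_right] at h4
  have h5 := real_inner_comm w fw
  have h6 := hBsymm w fw
  linarith
end

section
/- Let w ∈ H and let fw be a B-filtered version of w. Then ‖w − fw‖² ≤ (1/4)·B w w. -/
open RealInnerProductSpace

theorem filter_error_quarter_bound
    {H : Type*} [NormedAddCommGroup H] [InnerProductSpace ℝ H]
    (B : H →ₗ[ℝ] H →ₗ[ℝ] ℝ)
    (hBsymm : ∀ u v : H, B u v = B v u)
    (hBpos : ∀ v : H, 0 ≤ B v v)
    (w fw : H)
    (hfilt : ∀ v : H, B fw v + ⟪fw, v⟫ = ⟪w, v⟫) :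
    ‖w - fw‖ ^ 2 ≤ (1 / 4) * B w w := by
  set e := w - fw with he
  have h1 : ‖e‖ ^ 2 = B fw e := by
    have := hfilt e
    have h2 : ⟪e, e⟫ = B fw e := by
      rw [he, inner_sub_left]; linarith
    rw [← real_inner_self_eq_norm_sq, h2]
  have hfw : fw = w - e := by rw [he]; abel
  have hpos := hBpos ((1/2 : ℝ) • w - e)
  simp only [map_sub, map_smul, LinearMap.sub_apply, LinearMap.smul_apply,
    smul_eq_mul] at hpos
  have hsymm1 := hBsymm w e
  have h3 : B fw e = B w e - B e e := by
    rw [hfw]; simp [map_sub]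
  nlinarith [hpos, h1, h3]
end

section
/- (Lemma 1, estimate (estFilt1), abstract form.) Let Y be a further real inner product space, D : H → Y a linear map, and δ ≥ 0, and assume B v v ≤ δ²·‖D v‖² for all v ∈ H. Let w ∈ H and let fw be a B-filtered version of w. Then ‖w − fw‖ ≤ δ·‖D w‖. -/
open RealInnerProductSpace

theorem filter_error_L2_estimate
    {H : Type*} [NormedAddCommGroup H] [InnerProductSpace ℝ H]
    {Y : Type*} [NormedAddCommGroup Y] [InnerProductSpace ℝ Y]
    (B : H →ₗ[ℝ] H →ₗ[ℝ] ℝ)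
    (hBsymm : ∀ u v : H, B u v = B v u)
    (hBpos : ∀ v : H, 0 ≤ B v v)
    (D : H →ₗ[ℝ] Y) (δ : ℝ) (hδ : 0 ≤ δ)
    (hBD : ∀ v : H, B v v ≤ δ ^ 2 * ‖D v‖ ^ 2)
    (w fw : H)
    (hfilt : ∀ v : H, B fw v + ⟪fw, v⟫ = ⟪w, v⟫) :
    ‖w - fw‖ ≤ δ * ‖D w‖ := by
  have h1 := hfilt (w - fw)
  have hsq : ‖w - fw‖ ^ 2 = B fw w - B fw fw := by
    have : ⟪w - fw, w - fw⟫ = B fw w - B fw fw := by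
      have := hfilt (w - fw)
      simp [inner_sub_left, inner_sub_right, map_sub] at this ⊢
      linarith [real_inner_comm w fw, norm_sub_sq_real w fw]
    rw [← real_inner_self_eq_norm_sq, this]
  have hpos : (0:ℝ) ≤ B (fw - w) (fw - w) := hBpos _
  have hexp : B (fw - w) (fw - w) = B fw fw - 2 * B fw w + B w w := by
    simp [map_sub, LinearMap.sub_apply]
    have := hBsymm fw w
    ring_nf
    linarith
  have hww := hBD w
  have hfwfw := hBpos fw
  have hkey : ‖w - fw‖ ^ 2 ≤ (δ * ‖D w‖) ^ 2 := by
    nlinarith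
  nlinarith [norm_nonneg (w - fw), mul_nonneg hδ (norm_nonneg (D w))]
end

section
/- (Lemma 1, estimate (estFilt2), abstract form.) Let Y be a further real inner product space, D : H → Y a linear map, δ ≥ 0, and T : Y → Y a linear map that is self-adjoint (⟪T y, y'⟫ = ⟪y, T y'⟫ for all y, y'), positive semidefinite (⟪T y, y⟫ ≥ 0 for all y), and satisfies ‖T y‖² ≤ δ²·⟪T y, y⟫ for all y ∈ Y. Define B u v := ⟪T (D u), D v⟫ (a symmetric positive semidefinite bilinear form). Let S : H → H be a linear map satisfying ⟪v, S v⟫ = ‖D (S v)‖² for all v ∈ H, and define the dual seminorm ‖v‖_{V'} := ⟪v, S v⟫^{1/2}. Let w ∈ H and let fw be a B-filtered version of w. Then ‖w − fw‖_{V'}² ≤ δ²·B w w; in particular ‖w − fw‖_{V'} ≤ δ²·‖D w‖. -/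
open RealInnerProductSpace

theorem filter_error_dual_norm_estimate
    {H : Type*} [NormedAddCommGroup H] [InnerProductSpace ℝ H]
    {Y : Type*} [NormedAddCommGroup Y] [InnerProductSpace ℝ Y]
    (D : H →ₗ[ℝ] Y) (δ : ℝ) (hδ : 0 ≤ δ)
    (T : Y →ₗ[ℝ] Y)
    (hTsa : ∀ y y' : Y, ⟪T y, y'⟫ = ⟪y, T y'⟫)
    (hTpos : ∀ y : Y, 0 ≤ ⟪T y, y⟫)
    (hTbound : ∀ y : Y, ‖T y‖ ^ 2 ≤ δ ^ 2 * ⟪T y, y⟫)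
    (B : H → H → ℝ)
    (hB : ∀ u v : H, B u v = ⟪T (D u), D v⟫)
    (S : H →ₗ[ℝ] H)
    (hS : ∀ v : H, ⟪v, S v⟫ = ‖D (S v)‖ ^ 2)
    (w fw : H)
    (hfilt : ∀ v : H, B fw v + ⟪fw, v⟫ = ⟪w, v⟫) :
    ⟪w - fw, S (w - fw)⟫ ≤ δ ^ 2 * B w w ∧
      Real.sqrt ⟪w - fw, S (w - fw)⟫ ≤ δ ^ 2 * ‖D w‖ := by
  set e : H := w - fw with he
  have hDe : D e = D w - D fw := map_sub D w fw
  -- cross term B fw e = ‖e‖²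
  have hbfe : ⟪T (D fw), D e⟫ = ‖e‖ ^ 2 := by
    have h := hfilt e
    rw [hB] at h
    have : ⟪T (D fw), D e⟫ = ⟪w, e⟫ - ⟪fw, e⟫ := by linarith
    rw [this, ← inner_sub_left, ← he, real_inner_self_eq_norm_sq]
  -- monotonicity: Q(fw) ≤ B w w
  have hQmono : ⟪T (D fw), D fw⟫ ≤ B w w := by
    rw [hB]
    have hw : D w = D fw + D e := by rw [hDe]; abel
    rw [hw, map_add, inner_add_left, inner_add_right, inner_add_right]
    have h1 : ⟪T (D e), D fw⟫ = ⟪T (D fw), D e⟫ := by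
      rw [hTsa, real_inner_comm]
    have h2 := hTpos (D e)
    have h3 : (0:ℝ) ≤ ‖e‖ ^ 2 := by positivity
    nlinarith [hbfe]
  have hBww0 : (0:ℝ) ≤ B w w := by rw [hB]; exact hTpos _
  set x : ℝ := ⟪e, S e⟫ with hxdef
  have hx : x = ‖D (S e)‖ ^ 2 := hS e
  have hxnn : (0:ℝ) ≤ x := by rw [hx]; positivity
  have key : x = ⟪T (D fw), D (S e)⟫ := by
    have h := hfilt (S e)
    rw [hB] at h
    have : ⟪T (D fw), D (S e)⟫ = ⟪w, S e⟫ - ⟪fw, S e⟫ := by linarith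
    rw [this, ← inner_sub_left]
  have cauchy : ⟪T (D fw), D (S e)⟫ ≤ ‖T (D fw)‖ * ‖D (S e)‖ :=
    real_inner_le_norm _ _
  have hTdfw := hTbound (D fw)
  have hQfw := hTpos (D fw)
  -- x ≤ δ² B w w
  have main : x ≤ δ ^ 2 * B w w := by
    have hxle : x ≤ ‖T (D fw)‖ * ‖D (S e)‖ := key ▸ cauchy
    have hDSe : ‖D (S e)‖ ^ 2 = x := hx.symm
    have hn1 : (0:ℝ) ≤ ‖T (D fw)‖ := norm_nonneg _
    have hn2 : (0:ℝ) ≤ ‖D (S e)‖ := norm_nonneg _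
    -- x² ≤ ‖T Dfw‖² x ≤ δ² Q(fw) x ≤ δ² (B w w) x
    rcases eq_or_lt_of_le hxnn with h0 | h0
    · rw [← h0]; positivity
    · have step1 : x ^ 2 ≤ ‖T (D fw)‖ ^ 2 * ‖D (S e)‖ ^ 2 := by
        nlinarith [mul_le_mul hxle hxle hxnn (by positivity : (0:ℝ) ≤ ‖T (D fw)‖ * ‖D (S e)‖)]
      have step2 : ‖T (D fw)‖ ^ 2 * x ≤ (δ ^ 2 * ⟪T (D fw), D fw⟫) * x :=
        mul_le_mul_of_nonneg_right hTdfw hxnn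
      have step3 : (δ ^ 2 * ⟪T (D fw), D fw⟫) * x ≤ (δ ^ 2 * B w w) * x := by
        have := mul_le_mul_of_nonneg_left hQmono (by positivity : (0:ℝ) ≤ δ ^ 2)
        nlinarith
      have hsq : x ^ 2 ≤ (δ ^ 2 * B w w) * x := by
        rw [hDSe] at step1
        nlinarith
      nlinarith
  refine ⟨main, ?_⟩
  -- B w w ≤ δ² ‖D w‖²
  have hBle : B w w ≤ δ ^ 2 * ‖D w‖ ^ 2 := by
    have hc : ⟪T (D w), D w⟫ ≤ ‖T (D w)‖ * ‖D w‖ := real_inner_le_norm _ _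
    have hb := hTbound (D w)
    have hp := hTpos (D w)
    have hn : (0:ℝ) ≤ ‖D w‖ := norm_nonneg _
    rw [hB]
    rcases eq_or_lt_of_le hp with h0 | h0
    · rw [← h0]; positivity
    · nlinarith [norm_nonneg (T (D w))]
  have hxle2 : x ≤ (δ ^ 2 * ‖D w‖) ^ 2 := by
    have : (δ ^ 2 * ‖D w‖) ^ 2 = δ ^ 2 * (δ ^ 2 * ‖D w‖ ^ 2) := by ring
    rw [this]
    calc x ≤ δ ^ 2 * B w w := main
      _ ≤ δ ^ 2 * (δ ^ 2 * ‖D w‖ ^ 2) :=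
          mul_le_mul_of_nonneg_left hBle (by positivity)
  calc Real.sqrt x ≤ Real.sqrt ((δ ^ 2 * ‖D w‖) ^ 2) := Real.sqrt_le_sqrt hxle2
    _ = δ ^ 2 * ‖D w‖ := Real.sqrt_sq (by positivity)
end

section
/- (Sufficient stability condition (stab_cond2).) Let H be a real inner product space, G : H → H a linear map that is self-adjoint (⟪G u, v⟫ = ⟪u, G v⟫ for all u, v), and χ ≥ 0 a real number such that χ·⟪G u, u⟫ ≤ ‖u‖² for all u ∈ H. Then for all u, v ∈ H: χ·⟪G u, v⟫ ≥ (χ/2)·(⟪G u, u⟫ + ⟪G v, v⟫) − (1/2)·‖v − u‖². -/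
open RealInnerProductSpace

theorem stability_condition_self_adjoint
    {H : Type*} [NormedAddCommGroup H] [InnerProductSpace ℝ H]
    (G : H →ₗ[ℝ] H)
    (hGsa : ∀ u v : H, ⟪G u, v⟫ = ⟪u, G v⟫)
    (χ : ℝ) (hχ : 0 ≤ χ)
    (hstab : ∀ u : H, χ * ⟪G u, u⟫ ≤ ‖u‖ ^ 2) :
    ∀ u v : H,
      χ * ⟪G u, v⟫ ≥ (χ / 2) * (⟪G u, u⟫ + ⟪G v, v⟫) - (1 / 2) * ‖v - u‖ ^ 2 := by
  intro u v
  have h := hstab (v - u)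
  have hexp : ⟪G (v - u), v - u⟫ = ⟪G v, v⟫ + ⟪G u, u⟫ - 2 * ⟪G u, v⟫ := by
    have h1 : ⟪G v, u⟫ = ⟪G u, v⟫ := by
      rw [hGsa v u, real_inner_comm]
    simp only [map_sub, inner_sub_left, inner_sub_right, h1]
    ring
  rw [hexp] at h
  linarith
end

section
/- (Error relaxation bound, from the proof of the first error estimate.) Let χ ∈ [0,1], let ε, u ∈ H, let fε be a B-filtered version of ε and fu be a B-filtered version of u (with the same symmetric positive semidefinite bilinear form B), and set e := (1 − χ)·ε + χ·fε + χ·(u − fu). Then ‖e‖ ≤ ‖ε‖ + χ·‖u − fu‖. -/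
open RealInnerProductSpace

theorem error_relaxation_bound
    {H : Type*} [NormedAddCommGroup H] [InnerProductSpace ℝ H]
    (B : H →ₗ[ℝ] H →ₗ[ℝ] ℝ)
    (hBsymm : ∀ u v : H, B u v = B v u)
    (hBpos : ∀ v : H, 0 ≤ B v v)
    (χ : ℝ) (hχ0 : 0 ≤ χ) (hχ1 : χ ≤ 1)
    (ε u fε fu : H)
    (hfiltε : ∀ v : H, B fε v + ⟪fε, v⟫ = ⟪ε, v⟫)
    (hfiltu : ∀ v : H, B fu v + ⟪fu, v⟫ = ⟪u, v⟫)
    (e : H) (he : e = (1 - χ) • ε + χ • fε + χ • (u - fu)) :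
    ‖e‖ ≤ ‖ε‖ + χ * ‖u - fu‖ := by
  have hkey : ‖fε‖ ≤ ‖ε‖ := by
    have h1 := hfiltε fε
    have h2 : ‖fε‖ ^ 2 ≤ ⟪ε, fε⟫ := by
      have := hBpos fε
      have hn : ⟪fε, fε⟫ = ‖fε‖ ^ 2 := real_inner_self_eq_norm_sq fε
      nlinarith
    have h3 : ⟪ε, fε⟫ ≤ ‖ε‖ * ‖fε‖ := real_inner_le_norm ε fε
    rcases eq_or_lt_of_le (norm_nonneg fε) with h0 | h0
    · rw [← h0]; exact norm_nonneg ε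
    · nlinarith
  have hcomb : ‖(1 - χ) • ε + χ • fε‖ ≤ ‖ε‖ := by
    calc ‖(1 - χ) • ε + χ • fε‖ ≤ ‖(1 - χ) • ε‖ + ‖χ • fε‖ := norm_add_le _ _
      _ = (1 - χ) * ‖ε‖ + χ * ‖fε‖ := by
          rw [norm_smul, norm_smul, Real.norm_eq_abs, Real.norm_eq_abs,
            abs_of_nonneg (by linarith), abs_of_nonneg hχ0]
      _ ≤ (1 - χ) * ‖ε‖ + χ * ‖ε‖ := by nlinarith
      _ = ‖ε‖ := by ring
  calc ‖e‖ ≤ ‖(1 - χ) • ε + χ • fε‖ + ‖χ • (u - fu)‖ := by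
        rw [he]; exact norm_add_le _ _
    _ ≤ ‖ε‖ + χ * ‖u - fu‖ := by
        rw [norm_smul, Real.norm_eq_abs, abs_of_nonneg hχ0]
        linarith
end
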